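/- For every positive integer n, (1/n) * Σ_{k=0}^{n-1} 1/C(n-1,k) = (1/2^n) * Σ_{k=1}^{n} 2^k/k, where C(m,j) denotes the binomial coefficient. -/

import Mathlib

/-!
Write `S m = ∑_{k ≤ m} 1 / C(m, k)`. Splitting off `k = 0` and using
`C(m+1, j+1) = (m+1)/(j+1) · C(m, j)` expresses `S (m+1)` through `∑ (j+1)/C(m, j)`, which by the
symmetry `C(m, j) = C(m, m-j)` equals `(m+2)/2 · S m`. Hence `S (m+1) = (m+2)/(2(m+1)) · S m + 1`,
i.e. `2^(m+2)/(m+2) · S (m+1) = 2^(m+1)/(m+1) · S m + 2^(m+2)/(m+2)`, and this telescopes to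
`2^(m+1)/(m+1) · S m = ∑_{k=1}^{m+1} 2^k/k`.
-/

open Finset

section

variable {K : Type*} [Field K]

theorem two_mul_sum_add_one_div_choose (m : ℕ) :
    2 * ∑ j ∈ range (m + 1), ((j : K) + 1) / m.choose j =
      ((m : K) + 2) * ∑ j ∈ range (m + 1), (m.choose j : K)⁻¹ := by
  have reflect : ∑ j ∈ range (m + 1), ((j : K) + 1) / m.choose j =
      ∑ j ∈ range (m + 1), ((m : K) + 1 - j) / m.choose j := by
    rw [← sum_range_reflect]
    refine sum_congr rfl fun j hj => ?_
    have hjm : j ≤ m := Nat.lt_succ_iff.mp (mem_range.mp hj)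
    rw [Nat.add_sub_cancel, Nat.choose_symm hjm, Nat.cast_sub hjm]
    ring
  rw [two_mul]
  nth_rewrite 2 [reflect]
  rw [← sum_add_distrib, mul_sum]
  refine sum_congr rfl fun j _ => ?_
  ring

variable [CharZero K]

theorem sum_inv_choose_succ (m : ℕ) :
    ∑ k ∈ range (m + 2), ((m + 1).choose k : K)⁻¹ =
      ((m : K) + 2) / (2 * ((m : K) + 1)) * ∑ k ∈ range (m + 1), (m.choose k : K)⁻¹ + 1 := by
  have hm : (m : K) + 1 ≠ 0 := by exact_mod_cast m.succ_ne_zero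
  have absorb : ∀ j ∈ range (m + 1),
      ((m + 1).choose (j + 1) : K)⁻¹ = ((j : K) + 1) / m.choose j / ((m : K) + 1) := by
    intro j hj
    have hchoose : (m.choose j : K) ≠ 0 :=
      Nat.cast_ne_zero.mpr (Nat.choose_pos (Nat.lt_succ_iff.mp (mem_range.mp hj))).ne'
    have hchoose' : ((m + 1).choose (j + 1) : K) ≠ 0 :=
      Nat.cast_ne_zero.mpr (Nat.choose_pos (by simpa using mem_range.mp hj)).ne'
    have key : ((m : K) + 1) * m.choose j = (m + 1).choose (j + 1) * ((j : K) + 1) := by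
      exact_mod_cast Nat.add_one_mul_choose_eq m j
    field_simp
    linear_combination key
  have hsym := two_mul_sum_add_one_div_choose (K := K) m
  rw [sum_range_succ', sum_congr rfl absorb, ← sum_div, Nat.choose_zero_right, Nat.cast_one,
    inv_one]
  -- opaque sums, so that `field_simp` does not rewrite the summands
  generalize ∑ j ∈ range (m + 1), ((j : K) + 1) / m.choose j = T at hsym ⊢
  generalize ∑ j ∈ range (m + 1), (m.choose j : K)⁻¹ = S at hsym ⊢
  field_simp
  linear_combination hsym

theorem two_pow_div_mul_sum_inv_choose (m : ℕ) :
    2 ^ (m + 1) / ((m : K) + 1) * ∑ k ∈ range (m + 1), (m.choose k : K)⁻¹ =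
      ∑ k ∈ Icc 1 (m + 1), (2 : K) ^ k / k := by
  induction m with
  | zero => simp
  | succ m ih =>
    have hm1 : (m : K) + 1 ≠ 0 := by exact_mod_cast m.succ_ne_zero
    have hm2 : (m : K) + 1 + 1 ≠ 0 := by exact_mod_cast (m + 1).succ_ne_zero
    rw [sum_Icc_succ_top (by omega), ← ih, sum_inv_choose_succ]
    generalize ∑ k ∈ range (m + 1), (m.choose k : K)⁻¹ = S
    push_cast
    field_simp
    ring

end

theorem stmt_0 (n : ℕ) (hn : 0 < n) :
    (1 / n : ℝ) * ∑ k ∈ Finset.range n, (1 : ℝ) / (n - 1).choose k =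
      (1 / 2 ^ n : ℝ) * ∑ k ∈ Finset.Icc 1 n, (2 : ℝ) ^ k / k := by
  obtain ⟨m, rfl⟩ := Nat.exists_eq_add_one_of_ne_zero hn.ne'
  rw [← two_pow_div_mul_sum_inv_choose]
  simp only [Nat.add_sub_cancel, one_div]
  push_cast
  field_simp
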